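/- There exists a constant C > 0 depending only on ε ∈ (0,1) such that for every η in [-1/2,1/2]² \ {0}, the absolute value of the lattice sum Σ_{l ∈ ℤ²} (η+l)^⊥/|η+l|^{3-ε} (understood as the limit of symmetric partial sums) is at most C |η|^{-2+ε}. -/

import Mathlib

/-!
Identify ℝ² with ℂ, so that `x^⊥ = I * x`, and write the summand as `I * f (l + η)` with
`f z = ‖z‖ ^ p • z`, `p = ε - 3`. Since `f` is odd, pairing `l` with `-l` turns twice a symmetric
partial sum into `2 f η + ∑_{l ≠ 0} (f (l + η) - f (l - η))`, and by the mean value theorem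
applied to `t ↦ t ^ p` each difference is `O(‖η‖ ‖l‖ ^ p)`, which is summable over `ℤ²` as
`p < -2`. So every partial sum, hence the limit, is at most `‖η‖ ^ (p + 1) + K ‖η‖` for a
constant `K`, and `‖η‖ ≤ ‖η‖ ^ (p + 1)` because `‖η‖ ≤ 1`.
-/

open Filter

lemma Real.abs_rpow_sub_rpow_le_of_nonpos {p r u v : ℝ} (hp : p ≤ 0) (hr : 0 < r)
    (hu : r ≤ u) (hv : r ≤ v) : |u ^ p - v ^ p| ≤ -p * r ^ (p - 1) * |u - v| := by
  have hderiv : ∀ x ∈ Set.Ici r, HasDerivWithinAt (· ^ p) (p * x ^ (p - 1)) (Set.Ici r) x :=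
    fun x hx => (Real.hasDerivAt_rpow_const (.inl (hr.trans_le hx).ne')).hasDerivWithinAt
  have hbound : ∀ x ∈ Set.Ici r, ‖p * x ^ (p - 1)‖ ≤ -p * r ^ (p - 1) := fun x hx => by
    rw [norm_mul, Real.norm_of_nonpos hp,
      Real.norm_of_nonneg (Real.rpow_nonneg (hr.le.trans hx) _)]
    exact mul_le_mul_of_nonneg_left (Real.rpow_le_rpow_of_nonpos hr hx (by linarith))
      (neg_nonneg.mpr hp)
  simpa only [Real.norm_eq_abs] using
    (convex_Ici r).norm_image_sub_le_of_norm_hasDerivWithin_le hderiv hbound hv hu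

section NormedSpace

variable {E : Type*} [NormedAddCommGroup E] [NormedSpace ℝ E]

lemma norm_rpow_smul_sub_rpow_smul_le {p r : ℝ} (hp : p ≤ 0) (hr : 0 < r) {z w : E}
    (hz : r ≤ ‖z‖) (hw : r ≤ ‖w‖) :
    ‖‖z‖ ^ p • z - ‖w‖ ^ p • w‖ ≤ (1 - p * ‖w‖ / r) * r ^ p * ‖z - w‖ := by
  have hzp : ‖z‖ ^ p ≤ r ^ p := Real.rpow_le_rpow_of_nonpos hr hz hp
  have hdiff : |‖z‖ ^ p - ‖w‖ ^ p| ≤ -p * r ^ (p - 1) * ‖z - w‖ :=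
    (Real.abs_rpow_sub_rpow_le_of_nonpos hp hr hz hw).trans
      (by gcongr; exacts [mul_nonneg (neg_nonneg.mpr hp) (by positivity), abs_norm_sub_norm_le z w])
  calc ‖‖z‖ ^ p • z - ‖w‖ ^ p • w‖
      = ‖‖z‖ ^ p • (z - w) + (‖z‖ ^ p - ‖w‖ ^ p) • w‖ := by
        rw [smul_sub, sub_smul]; abel_nf
    _ ≤ ‖z‖ ^ p * ‖z - w‖ + |‖z‖ ^ p - ‖w‖ ^ p| * ‖w‖ := by
        refine (norm_add_le _ _).trans ?_
        rw [norm_smul, norm_smul, Real.norm_of_nonneg (by positivity), Real.norm_eq_abs]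
    _ ≤ r ^ p * ‖z - w‖ + -p * r ^ (p - 1) * ‖z - w‖ * ‖w‖ := by gcongr
    _ = (1 - p * ‖w‖ / r) * r ^ p * ‖z - w‖ := by
        rw [Real.rpow_sub_one hr.ne']; field_simp; ring

lemma norm_rpow_smul_add_sub_rpow_smul_sub_le {p : ℝ} (hp : p ≤ 0) {x e : E}
    (hx : x ≠ 0) (he : 4 * ‖e‖ ≤ 3 * ‖x‖) :
    ‖‖x + e‖ ^ p • (x + e) - ‖x - e‖ ^ p • (x - e)‖ ≤
      2 * (1 - 8 * p) * 4 ^ (-p) * ‖e‖ * ‖x‖ ^ p := by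
  have hx0 : 0 < ‖x‖ := norm_pos_iff.mpr hx
  have hplus : ‖x‖ / 4 ≤ ‖x + e‖ := by
    have := norm_sub_norm_le x (-e); rw [sub_neg_eq_add, norm_neg] at this; linarith
  have hminus : ‖x‖ / 4 ≤ ‖x - e‖ := by have := norm_sub_norm_le x e; linarith
  have hminus_le : ‖x - e‖ ≤ 2 * ‖x‖ := by have := norm_sub_le x e; linarith
  have hdist : ‖x + e - (x - e)‖ = 2 * ‖e‖ := by
    rw [show x + e - (x - e) = (2 : ℝ) • e by rw [two_smul]; abel, norm_smul]; norm_num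
  have hpow : (‖x‖ / 4) ^ p = 4 ^ (-p) * ‖x‖ ^ p := by
    rw [Real.div_rpow hx0.le (by norm_num), Real.rpow_neg (by norm_num)]; ring
  calc _ ≤ (1 - p * ‖x - e‖ / (‖x‖ / 4)) * (‖x‖ / 4) ^ p * ‖x + e - (x - e)‖ :=
        norm_rpow_smul_sub_rpow_smul_le hp (by positivity) hplus hminus
    _ ≤ (1 - 8 * p) * (‖x‖ / 4) ^ p * (2 * ‖e‖) := by
        rw [hdist]
        gcongr
        rw [le_div_iff₀ (by positivity)]
        nlinarith [mul_le_mul_of_nonpos_left hminus_le hp]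
    _ = 2 * (1 - 8 * p) * 4 ^ (-p) * ‖e‖ * ‖x‖ ^ p := by rw [hpow]; ring

end NormedSpace

lemma summable_norm_rpow_int_prod {p : ℝ} (hp : p < -2) :
    Summable fun l : ℤ × ℤ => ‖l‖ ^ p := by
  have h := EisensteinSeries.summable_one_div_norm_rpow (k := -p) (by linarith)
  rw [neg_neg] at h
  rw [← (IsometryEquiv.piFinTwo fun _ => ℤ).toEquiv.summable_iff]
  refine h.congr fun x => ?_
  have := (IsometryEquiv.piFinTwo fun _ => ℤ).dist_eq x 0
  simp only [dist_zero_right] at this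
  rw [Function.comp_apply, ← this, ← dist_zero_right]
  rfl

lemma one_le_norm_int_prod_of_ne_zero {l : ℤ × ℤ} (hl : l ≠ 0) : 1 ≤ ‖l‖ := by
  rw [Prod.norm_def, Int.norm_eq_abs, Int.norm_eq_abs]
  rcases l with ⟨a, b⟩
  by_cases ha : a = 0
  · have hb : b ≠ 0 := by rintro rfl; exact hl (by rw [ha]; rfl)
    exact le_max_of_le_right (by exact_mod_cast Int.one_le_abs hb)
  · exact le_max_of_le_left (by exact_mod_cast Int.one_le_abs ha)

def latticePoint (l : ℤ × ℤ) : ℂ := ⟨l.1, l.2⟩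

lemma latticePoint_neg (l : ℤ × ℤ) : latticePoint (-l) = -latticePoint l := by
  apply Complex.ext <;> simp [latticePoint]

lemma norm_le_norm_latticePoint (l : ℤ × ℤ) : ‖l‖ ≤ ‖latticePoint l‖ := by
  rw [Prod.norm_def, Int.norm_eq_abs, Int.norm_eq_abs]
  exact max_le (Complex.abs_re_le_norm (latticePoint l))
    (Complex.abs_im_le_norm (latticePoint l))

lemma norm_sum_rpow_smul_latticePoint_add_le {p : ℝ} (hp : p < -2) {e : ℂ} (he : 4 * ‖e‖ ≤ 3)
    {s : Finset (ℤ × ℤ)} (hs : ∀ l ∈ s, -l ∈ s) :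
    ‖∑ l ∈ s, ‖latticePoint l + e‖ ^ p • (latticePoint l + e)‖ ≤
      ‖e‖ ^ (p + 1) + (1 - 8 * p) * 4 ^ (-p) * ‖e‖ * ∑' l : ℤ × ℤ, ‖l‖ ^ p := by
  set F : ℂ → ℂ := fun z => ‖z‖ ^ p • z with hF
  have hodd : ∀ z, F (-z) = -F z := fun z => by simp only [hF, norm_neg, smul_neg]
  have hreflect : ∑ l ∈ s, F (latticePoint l + e) = -∑ l ∈ s, F (latticePoint l - e) := by
    rw [← Finset.sum_neg_distrib]
    refine Finset.sum_nbij' (-·) (-·) hs hs (by simp) (by simp) fun l _ => ?_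
    rw [latticePoint_neg, ← neg_add', hodd, neg_neg]
  have hpair : (2 : ℝ) • ∑ l ∈ s, F (latticePoint l + e) =
      ∑ l ∈ s, (F (latticePoint l + e) - F (latticePoint l - e)) := by
    rw [Finset.sum_sub_distrib, two_smul]
    nth_rewrite 2 [hreflect]
    rw [← sub_eq_add_neg]
  set K := 2 * (1 - 8 * p) * 4 ^ (-p) * ‖e‖
  have hK : 0 ≤ K := by
    have : 0 ≤ 1 - 8 * p := by linarith
    positivity
  have hterm : ∀ l : ℤ × ℤ, ‖F (latticePoint l + e) - F (latticePoint l - e)‖ ≤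
      (if l = 0 then 2 * ‖e‖ ^ (p + 1) else 0) + K * ‖l‖ ^ p := by
    intro l
    rcases eq_or_ne l 0 with rfl | hl
    -- `‖(0 : ℤ × ℤ)‖ ^ p = 0` as `p ≠ 0`, so the `l = 0` term is carried by the `if` alone.
    · have h0 : latticePoint 0 = 0 := by apply Complex.ext <;> simp [latticePoint]
      rw [h0, zero_add, zero_sub, hodd, sub_neg_eq_add, ← two_smul ℝ, norm_smul, hF,
        norm_smul, Real.norm_of_nonneg (Real.rpow_nonneg (norm_nonneg e) p),
        Real.rpow_add_one' (norm_nonneg e) (by linarith), norm_zero, Real.zero_rpow (by linarith),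
        if_pos rfl]
      norm_num
    · have hl1 := one_le_norm_int_prod_of_ne_zero hl
      have hx1 := hl1.trans (norm_le_norm_latticePoint l)
      have hx : latticePoint l ≠ 0 := norm_pos_iff.mp (by linarith)
      rw [if_neg hl, zero_add]
      refine (norm_rpow_smul_add_sub_rpow_smul_sub_le (by linarith) hx (by linarith)).trans ?_
      exact mul_le_mul_of_nonneg_left (Real.rpow_le_rpow_of_nonpos (by linarith)
        (norm_le_norm_latticePoint l) (by linarith)) hK
  have hsum : ∑ l ∈ s, ‖l‖ ^ p ≤ ∑' l : ℤ × ℤ, ‖l‖ ^ p :=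
    (summable_norm_rpow_int_prod hp).sum_le_tsum s fun _ _ => by positivity
  have hzero : (if (0 : ℤ × ℤ) ∈ s then 2 * ‖e‖ ^ (p + 1) else 0) ≤ 2 * ‖e‖ ^ (p + 1) := by
    split_ifs
    exacts [le_rfl, by positivity]
  have htwice : 2 * ‖∑ l ∈ s, F (latticePoint l + e)‖ ≤
      2 * ‖e‖ ^ (p + 1) + K * ∑' l : ℤ × ℤ, ‖l‖ ^ p := calc
    2 * ‖∑ l ∈ s, F (latticePoint l + e)‖
        = ‖∑ l ∈ s, (F (latticePoint l + e) - F (latticePoint l - e))‖ := by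
          rw [← hpair, norm_smul, Real.norm_two]
      _ ≤ ∑ l ∈ s, ((if l = 0 then 2 * ‖e‖ ^ (p + 1) else 0) + K * ‖l‖ ^ p) :=
          (norm_sum_le _ _).trans (Finset.sum_le_sum fun l _ => hterm l)
      _ = (if (0 : ℤ × ℤ) ∈ s then 2 * ‖e‖ ^ (p + 1) else 0) + K * ∑ l ∈ s, ‖l‖ ^ p := by
          rw [Finset.sum_add_distrib, Finset.sum_ite_eq', Finset.mul_sum]
      _ ≤ 2 * ‖e‖ ^ (p + 1) + K * ∑' l : ℤ × ℤ, ‖l‖ ^ p := by gcongr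
  linarith

lemma equivRealProdCLM_symm_rpow_smul_perp (q : ℝ) (η : ℝ × ℝ) (l : ℤ × ℤ) :
    Complex.equivRealProdCLM.symm
        ((Real.sqrt ((η.1 + (l.1 : ℝ)) ^ 2 + (η.2 + (l.2 : ℝ)) ^ 2)) ^ q •
          ((-(η.2 + (l.2 : ℝ)), η.1 + (l.1 : ℝ)) : ℝ × ℝ)) =
      Complex.I * (‖latticePoint l + Complex.equivRealProdCLM.symm η‖ ^ q •
        (latticePoint l + Complex.equivRealProdCLM.symm η)) := by
  set z := latticePoint l + Complex.equivRealProdCLM.symm η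
  have hre : z.re = η.1 + l.1 := by simp [z, latticePoint, add_comm]
  have him : z.im = η.2 + l.2 := by simp [z, latticePoint, add_comm]
  rw [map_smul, ← hre, ← him, ← Complex.norm_eq_sqrt_sq_add_sq, mul_smul_comm]
  congr 1
  apply Complex.ext <;> simp [Complex.equivRealProdCLM_symm_apply]

/-- There exists a constant `C > 0` depending only on `ε ∈ (0,1)` such that for
every `η ∈ [-1/2,1/2]² \ {0}`, the absolute value of the lattice sum
`∑_{l ∈ ℤ²} (η+l)^⊥ / |η+l|^{3-ε}` (understood as the limit of symmetric partial sums)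
is at most `C |η|^{-2+ε}`. -/
theorem stmt1 (ε : ℝ) (hε : 0 < ε) (hε1 : ε < 1) :
    ∃ C : ℝ, 0 < C ∧ ∀ η : ℝ × ℝ,
      η ∈ Set.Icc ((-(1:ℝ)/2, -(1:ℝ)/2)) ((1/2 : ℝ), (1/2 : ℝ)) → η ≠ 0 →
      ∀ L : ℝ × ℝ, Tendsto (fun N : ℕ =>
          ∑ l ∈ Finset.Icc (-(N:ℤ)) (N:ℤ) ×ˢ Finset.Icc (-(N:ℤ)) (N:ℤ),
            (Real.sqrt ((η.1 + (l.1 : ℝ))^2 + (η.2 + (l.2 : ℝ))^2)) ^ (-(3 - ε)) •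
              ((-(η.2 + (l.2 : ℝ)), η.1 + (l.1 : ℝ)) : ℝ × ℝ))
        atTop (nhds L) →
      Real.sqrt (L.1^2 + L.2^2) ≤ C * (Real.sqrt (η.1^2 + η.2^2)) ^ (-2 + ε) := by
  set p := -(3 - ε)
  set K := (1 - 8 * p) * 4 ^ (-p) * ∑' l : ℤ × ℤ, ‖l‖ ^ p with hK_def
  have hK : 0 ≤ K := mul_nonneg (mul_nonneg (by linarith) (by positivity))
    (tsum_nonneg fun _ => by positivity)
  refine ⟨1 + K, by linarith, fun η hη _ L hL => ?_⟩
  set φ := Complex.equivRealProdCLM.symm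
  have hnorm : ∀ x : ℝ × ℝ, ‖φ x‖ = Real.sqrt (x.1 ^ 2 + x.2 ^ 2) := fun x => by
    simp [φ, Complex.norm_eq_sqrt_sq_add_sq, Complex.equivRealProdCLM_symm_apply]
  have he : 4 * ‖φ η‖ ≤ 3 := by
    obtain ⟨⟨h1, h2⟩, h3, h4⟩ := hη
    have : ‖φ η‖ ≤ 3 / 4 := by
      rw [hnorm, Real.sqrt_le_left (by norm_num)]
      dsimp only at h1 h2 h3 h4
      nlinarith
    linarith
  have hlim : ‖φ L‖ ≤ ‖φ η‖ ^ (p + 1) + K * ‖φ η‖ :=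
    le_of_tendsto' ((φ.continuous.tendsto L).comp hL).norm fun N => by
      simp only [Function.comp_apply, map_sum, φ, equivRealProdCLM_symm_rpow_smul_perp,
        ← Finset.mul_sum, norm_mul, Complex.norm_I, one_mul]
      refine (norm_sum_rpow_smul_latticePoint_add_le (p := p) (by linarith) he
        fun l hl => ?_).trans_eq (by rw [hK_def]; ring)
      simp only [Finset.mem_product, Finset.mem_Icc, Prod.fst_neg, Prod.snd_neg] at hl ⊢
      omega
  have hsmall : ‖φ η‖ ≤ ‖φ η‖ ^ (p + 1) :=
    Real.self_le_rpow_of_le_one (norm_nonneg _) (by linarith) (by linarith)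
  rw [← hnorm, ← hnorm, show -2 + ε = p + 1 by ring]
  linarith [mul_le_mul_of_nonneg_left hsmall hK]
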